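/- Let M = ((a,b),(c,d)) ∈ SL(2,ℝ) and assume either c ≠ 0, or c = 0 and a > 0. Then w(M, M⁻¹) = 0. -/

import Mathlib

noncomputable section
open Complex

/-- j(M,z) = cz + d for a real 2×2 matrix M = ((a,b),(c,d)). -/
def j2 (M : Matrix (Fin 2) (Fin 2) ℝ) (z : ℂ) : ℂ := (M 1 0 : ℝ) * z + (M 1 1 : ℝ)

/-- The Möbius action M⟨z⟩ = (az+b)/(cz+d). -/
def act2 (M : Matrix (Fin 2) (Fin 2) ℝ) (z : ℂ) : ℂ :=
  ((M 0 0 : ℝ) * z + (M 0 1 : ℝ)) / ((M 1 0 : ℝ) * z + (M 1 1 : ℝ))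

/-- The degree-one cocycle
w(M,N) = (1/2π)(Arg j(MN,i) - Arg j(M,N⟨i⟩) - Arg j(N,i)),
where Arg is the principal argument with values in (-π,π]. -/
def w2 (M N : Matrix (Fin 2) (Fin 2) ℝ) : ℝ :=
  ((j2 (M * N) Complex.I).arg - (j2 M (act2 N Complex.I)).arg
    - (j2 N Complex.I).arg) / (2 * Real.pi)

/- With z := j(M⁻¹, i) = a - c·i, the cocycle relation j(MN, i) = j(M, N⟨i⟩) j(N, i)
applied to N = M⁻¹ gives j(M, M⁻¹⟨i⟩) = z⁻¹, while j(1, i) = 1. The hypothesis says exactly that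
z lies in the slit plane, where Arg z⁻¹ = -Arg z, so the three arguments cancel. -/

theorem j2_mul (M N : Matrix (Fin 2) (Fin 2) ℝ) {z : ℂ} (hN : j2 N z ≠ 0) :
    j2 (M * N) z = j2 M (act2 N z) * j2 N z := by
  have hact : act2 N z = (N 0 0 * z + N 0 1) / j2 N z := rfl
  rw [hact, j2, j2, add_mul, mul_assoc, div_mul_cancel₀ _ hN]
  simp only [j2, Matrix.mul_apply, Fin.sum_univ_two]
  push_cast
  ring

theorem j2_one (z : ℂ) : j2 1 z = 1 := by
  simp [j2]

theorem j2_inv_of_det_eq_one {M : Matrix (Fin 2) (Fin 2) ℝ} (hM : M.det = 1) (z : ℂ) :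
    j2 M⁻¹ z = M 0 0 - M 1 0 * z := by
  simp [j2, Matrix.inv_def, Matrix.adjugate_fin_two, hM]
  ring

theorem j2_act2_inv {M : Matrix (Fin 2) (Fin 2) ℝ} (hM : M.det = 1) {z : ℂ}
    (hz : j2 M⁻¹ z ≠ 0) : j2 M (act2 M⁻¹ z) = (j2 M⁻¹ z)⁻¹ := by
  have hcocycle := j2_mul M M⁻¹ hz
  rw [Matrix.mul_nonsing_inv M (by simp [hM]), j2_one] at hcocycle
  exact eq_inv_of_mul_eq_one_left hcocycle.symm

theorem j2_inv_I_mem_slitPlane {M : Matrix (Fin 2) (Fin 2) ℝ} (hM : M.det = 1)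
    (h : M 1 0 ≠ 0 ∨ (M 1 0 = 0 ∧ 0 < M 0 0)) : j2 M⁻¹ I ∈ slitPlane := by
  rw [j2_inv_of_det_eq_one hM, mem_slitPlane_iff]
  rcases h with hc | ⟨hc, ha⟩
  · right; simpa using hc
  · left; simpa [hc] using ha

theorem stmt4 (M : Matrix (Fin 2) (Fin 2) ℝ) (hM : M.det = 1)
    (h : M 1 0 ≠ 0 ∨ (M 1 0 = 0 ∧ 0 < M 0 0)) :
    w2 M M⁻¹ = 0 := by
  have hz := j2_inv_I_mem_slitPlane hM h
  rw [w2, Matrix.mul_nonsing_inv M (by simp [hM]), j2_one, j2_act2_inv hM (slitPlane_ne_zero hz),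
    arg_inv, if_neg (slitPlane_arg_ne_pi hz), arg_one]
  ring
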